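/- If a symmetric reflexive {0,1}-valued function d on X fails the triangle inequality, then there exists a finite sequence in X and a permutation of it such that the discrete uniqueness scores of the two orderings differ. -/

import Mathlib

/-!
For a `{0,1}`-valued `d`, a violation `d a c > d a b + d b c` forces `d a b = d b c = 0` and
`d a c = 1`. In the ordering `(c, a, b)` the first two entries count as unique (`a` is at distance
`1` from `c`), giving score `2/3`; in the ordering `(c, b, a)` only `c` does, giving `1/3`.
-/

open Classical in
noncomputable def discreteUniqueness {X : Type*} (d : X → X → ℝ) {n : ℕ} (y : Fin n → X) : ℝ :=
  (∑ i : Fin n, if ∀ j < i, d (y i) (y j) ≠ 0 then (1 : ℝ) else 0) / n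

theorem discreteUniqueness_three {X : Type*} (d : X → X → ℝ) (y₀ y₁ y₂ : X) :
    discreteUniqueness d ![y₀, y₁, y₂] =
      (1 + (if d y₁ y₀ ≠ 0 then 1 else 0) + (if d y₂ y₀ ≠ 0 ∧ d y₂ y₁ ≠ 0 then 1 else 0)) / 3 := by
  rw [discreteUniqueness, Fin.sum_univ_three]
  congr 1
  simp [Fin.forall_fin_succ]

theorem exists_triangle_violation_of_zero_one {X : Type*} (d : X → X → ℝ)
    (hvals : ∀ a b, d a b = 0 ∨ d a b = 1) (htri : ¬ ∀ a b c, d a c ≤ d a b + d b c) :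
    ∃ a b c, d a b = 0 ∧ d b c = 0 ∧ d a c = 1 := by
  push Not at htri
  obtain ⟨a, b, c, h⟩ := htri
  refine ⟨a, b, c, ?_⟩
  rcases hvals a b with hab | hab <;> rcases hvals b c with hbc | hbc <;>
    rcases hvals a c with hac | hac <;> first | exact ⟨hab, hbc, hac⟩ | (exfalso; linarith)

open Classical in
theorem stmt19_general {X : Type*} (d : X → X → ℝ)
    (hvals : ∀ a b, d a b = 0 ∨ d a b = 1)
    (htri : ¬ ∀ a b c, d a c ≤ d a b + d b c) :
    ∃ (n : ℕ) (x : Fin n → X) (σ : Equiv.Perm (Fin n)),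
      (∑ i : Fin n, if ∀ j < i, d (x (σ i)) (x (σ j)) ≠ 0 then (1 : ℝ) else 0) / n
        ≠ (∑ i : Fin n, if ∀ j < i, d (x i) (x j) ≠ 0 then (1 : ℝ) else 0) / n := by
  obtain ⟨a, b, c, hab, hbc, hac⟩ := exists_triangle_violation_of_zero_one d hvals htri
  refine ⟨3, ![c, a, b], Equiv.swap 1 2, ?_⟩
  have hswap : ![c, a, b] ∘ Equiv.swap 1 2 = ![c, b, a] := by
    ext i; fin_cases i <;> rfl
  change discreteUniqueness d (![c, a, b] ∘ Equiv.swap 1 2) ≠ discreteUniqueness d ![c, a, b]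
  rw [hswap, discreteUniqueness_three, discreteUniqueness_three]
  norm_num [hab, hbc, hac]

open Classical in
theorem stmt19 {X : Type*} (d : X → X → ℝ)
    (hvals : ∀ a b, d a b = 0 ∨ d a b = 1)
    (hrefl : ∀ a, d a a = 0)
    (hsymm : ∀ a b, d a b = d b a)
    (htri : ¬ ∀ a b c, d a c ≤ d a b + d b c) :
    ∃ (n : ℕ) (x : Fin n → X) (σ : Equiv.Perm (Fin n)),
      (∑ i : Fin n, if ∀ j < i, d (x (σ i)) (x (σ j)) ≠ 0 then (1 : ℝ) else 0) / n
        ≠ (∑ i : Fin n, if ∀ j < i, d (x i) (x j) ≠ 0 then (1 : ℝ) else 0) / n :=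
  stmt19_general d hvals htri
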